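/- arXiv:1301.1857 — 3 statements merged into one kernel-verified Lean document; each statement's English description precedes it below -/
import Mathlib

section
/- (Lemma 2.4, minimum version) Let x, y ∈ ℝⁿ with y strictly decreasing (y₁ > y₂ > ⋯ > yₙ), and suppose the coordinates of x take at least k distinct values, i.e. the set {x₁, …, xₙ} has cardinality ≥ k. Then the set I_m(x,y) = {P : P is an n×n permutation matrix and Σᵢ (Pᵀ *ᵥ x)ᵢ · yᵢ = m(x,y)} has cardinality at most (n−k+1)!. -/
open Matrix BigOperators

/-- A matrix is doubly stochastic: nonnegative entries, row sums and column sums all 1. -/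
def IsDoublyStochastic {n : ℕ} (A : Matrix (Fin n) (Fin n) ℝ) : Prop :=
  (∀ i j, 0 ≤ A i j) ∧ (∀ i, ∑ j, A i j = 1) ∧ (∀ j, ∑ i, A i j = 1)

/-- `Maj x y` means `x ≺ y`: `x` is majorized by `y`. -/
def Maj {n : ℕ} (x y : Fin n → ℝ) : Prop :=
  ∃ A : Matrix (Fin n) (Fin n) ℝ, IsDoublyStochastic A ∧ x = A *ᵥ y

/-- `MajEq x y` means `x ∼ y`: mutual majorization. -/
def MajEq {n : ℕ} (x y : Fin n → ℝ) : Prop := Maj x y ∧ Maj y x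

/-- `P` is a permutation matrix. -/
def IsPermMatrix {n : ℕ} (P : Matrix (Fin n) (Fin n) ℝ) : Prop :=
  ∃ σ : Equiv.Perm (Fin n), P = σ.permMatrix ℝ

/-- The increasing rearrangement `x↑` of a vector. -/
noncomputable def incSort {n : ℕ} (x : Fin n → ℝ) : Fin n → ℝ := x ∘ Tuple.sort x

/-- The decreasing rearrangement `x↓` of a vector. -/
noncomputable def decSort {n : ℕ} (x : Fin n → ℝ) : Fin n → ℝ :=
  fun i => (x ∘ Tuple.sort x) i.rev

/-! If `P = σ.permMatrix` attains the minimum `m(x, y)`, then by the equality case of the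
rearrangement inequality `τ = σ ∘ sort x` satisfies `x↑ ∘ τ = x↑`, and `P` is determined by `τ`. Such permutations only shuffle the level sets of `x↑`; with `c ≥ k` nonempty
level sets of sizes `m₁ + ⋯ + m_c = n` there are `∏ mᵢ! ≤ (n - c + 1)!` of them. -/

open Equiv Finset Nat

theorem Nat.factorial_succ_mul_factorial_succ_le (a b : ℕ) :
    (a + 1)! * (b + 1)! ≤ (a + b + 1)! := by
  induction a with
  | zero => simp
  | succ a ih =>
    calc (a + 2)! * (b + 1)! = (a + 2) * ((a + 1)! * (b + 1)!) := by
          rw [Nat.factorial_succ (a + 1), mul_assoc]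
      _ ≤ (a + b + 2) * (a + b + 1)! := Nat.mul_le_mul (by omega) ih
      _ = (a + 1 + b + 1)! := by
          rw [show a + 1 + b + 1 = a + b + 1 + 1 by omega, Nat.factorial_succ (a + b + 1)]

theorem Finset.prod_factorial_succ_le {ι : Type*} (s : Finset ι) (g : ι → ℕ) :
    ∏ i ∈ s, (g i + 1)! ≤ (∑ i ∈ s, g i + 1)! := by
  classical
  induction s using Finset.induction_on with
  | empty => simp
  | insert a s ha ih =>
    rw [prod_insert ha, sum_insert ha, add_assoc]
    exact (Nat.mul_le_mul_left _ ih).trans (Nat.factorial_succ_mul_factorial_succ_le _ _)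

theorem card_perm_comp_eq_self_le {α β : Type*} [Fintype α] [DecidableEq α] [DecidableEq β]
    (u : α → β) :
    Fintype.card {π : Perm α // u ∘ π = u} ≤ (Fintype.card α - #(univ.image u) + 1)! := by
  set fiber : β → ℕ := fun v => #{a | u a = v}
  have hfiber : ∀ v ∈ univ.image u, fiber v - 1 + 1 = fiber v := fun v hv => by
    obtain ⟨a, -, rfl⟩ := mem_image.mp hv
    exact Nat.sub_add_cancel (card_pos.mpr ⟨a, by simp⟩)
  have hsum : ∑ v ∈ univ.image u, (fiber v - 1) = Fintype.card α - #(univ.image u) := by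
    have := card_eq_sum_card_image u univ
    rw [← sum_congr rfl hfiber, sum_add_distrib, ← card_eq_sum_ones, Finset.card_univ] at this
    omega
  rw [DomMulAct.stabilizer_card']
  simp_rw [Fintype.card_subtype]
  calc ∏ v ∈ univ.image u, (fiber v)! = ∏ v ∈ univ.image u, (fiber v - 1 + 1)! :=
        prod_congr rfl fun v hv => by rw [hfiber v hv]
    _ ≤ _ := hsum ▸ prod_factorial_succ_le _ _

theorem Matrix.sum_transpose_permMatrix_mulVec_mul {ι R : Type*} [Fintype ι] [DecidableEq ι]
    [CommRing R] (σ : Perm ι) (x y : ι → R) :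
    ∑ i, ((σ.permMatrix R)ᵀ *ᵥ x) i * y i = ∑ i, x i * y (σ i) := by
  rw [Matrix.transpose_permMatrix, Matrix.permMatrix_mulVec]
  exact Fintype.sum_equiv σ⁻¹ _ _ fun i => by simp

theorem decSort_eq_self_of_antitone {n : ℕ} {y : Fin n → ℝ} (hy : Antitone y) :
    decSort y = y := by
  have hrev : y ∘ Fin.revPerm = y ∘ Tuple.sort y :=
    Tuple.comp_sort_eq_comp_iff_monotone.mpr fun i j hij => hy (Fin.rev_le_rev.mpr hij)
  funext i
  simpa [decSort] using (congrFun hrev i.rev).symm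

theorem comp_perm_eq_self_of_sum_mul_comp_perm_eq {n : ℕ} {α : Type*} [Semiring α]
    [LinearOrder α] [IsStrictOrderedRing α] [ExistsAddOfLE α] {u y : Fin n → α}
    (hu : Monotone u) (hy : StrictAnti y) {τ : Perm (Fin n)}
    (h : ∑ i, u i * y (τ i) = ∑ i, u i * y i) : u ∘ τ = u := by
  have hτ : Antivary (u ∘ τ.symm) y := by
    simpa [Function.comp_assoc] using
      ((hu.antivary hy.antitone).sum_mul_eq_sum_mul_comp_perm_iff.mp h).comp_right τ.symm
  have hsymm : u ∘ τ.symm = u ∘ ⇑(1 : Perm (Fin n)) :=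
    Tuple.unique_monotone (hy.trans_antivary hτ) hu
  funext i
  simpa using (congrFun hsymm (τ i)).symm

/-- Lemma 2.4, minimum version: if `x` has at least `k` distinct
coordinate values and `y` is strictly decreasing, then
`|I_m(x,y)| ≤ (n - k + 1)!`. -/
theorem card_Im_le {n k : ℕ} (x y : Fin n → ℝ) (hy : StrictAnti y)
    (hx : k ≤ (Finset.univ.image x).card) :
    {P : Matrix (Fin n) (Fin n) ℝ | IsPermMatrix P ∧
      ∑ i, (Pᵀ *ᵥ x) i * y i = ∑ i, incSort x i * decSort y i}.ncard
      ≤ (n - k + 1).factorial := by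
  set s := Tuple.sort x
  set S := {τ : Perm (Fin n) | incSort x ∘ τ = incSort x}
  have hsub : {P : Matrix (Fin n) (Fin n) ℝ | IsPermMatrix P ∧
      ∑ i, (Pᵀ *ᵥ x) i * y i = ∑ i, incSort x i * decSort y i} ⊆
      (fun τ => (τ * s⁻¹).permMatrix ℝ) '' S := by
    rintro _ ⟨⟨σ, rfl⟩, hσ⟩
    refine ⟨σ * s, ?_, by simp⟩
    rw [decSort_eq_self_of_antitone hy.antitone,
      Matrix.sum_transpose_permMatrix_mulVec_mul] at hσ
    exact comp_perm_eq_self_of_sum_mul_comp_perm_eq (Tuple.monotone_sort x) hy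
      ((Fintype.sum_equiv s _ _ fun i => rfl).trans hσ)
  have himage : #(univ.image (incSort x)) = #(univ.image x) := by
    rw [incSort, ← image_image, image_univ_equiv]
  calc _ ≤ S.ncard := (Set.ncard_le_ncard hsub).trans (Set.ncard_image_le S.toFinite)
    _ = Fintype.card {τ : Perm (Fin n) // incSort x ∘ τ = incSort x} := by
      rw [← Nat.card_coe_set_eq, Nat.card_eq_fintype_card]; rfl
    _ ≤ (n - k + 1)! := by
      refine (card_perm_comp_eq_self_le _).trans (Nat.factorial_le ?_)
      rw [himage, Fintype.card_fin]; omega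
end

section
/- (Claim 2, Step 2) Let n ≥ 3, let α ∈ ℝⁿ have strictly decreasing coordinates (α₁ > α₂ > ⋯ > αₙ), and let A be an n×n real matrix with all entries positive such that A *ᵥ (P *ᵥ α) ∼ A *ᵥ α for every n×n permutation matrix P. If every row of A is nonconstant, then each row aₗ of A is constant except in exactly one coordinate (there exist λₗ ≠ γₗ and an index jₗ with aₗ(jₗ) = γₗ and aₗ(i) = λₗ for i ≠ jₗ); moreover the sets I_M(aₗ, α) for l = 1, …, n are pairwise disjoint, each of cardinality (n−1)!, and their cardinalities sum to n!. -/
open Matrix BigOperators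

/-- The set `I_M(x, y)` of permutation matrices attaining `M(x, y)`. -/
noncomputable def IM {n : ℕ} (x y : Fin n → ℝ) : Set (Matrix (Fin n) (Fin n) ℝ) :=
  {P | IsPermMatrix P ∧ ∑ i, (Pᵀ *ᵥ x) i * decSort y i = ∑ i, decSort x i * decSort y i}

/-!
Put `v_σ = A *ᵥ (α ∘ σ)`. Since every `v_σ` is mutually majorized with `A *ᵥ α`, all of them
have the same maximum `c`, attained in the same number `μ ≥ 1` of coordinates. By the
rearrangement inequality, `(v_σ)_k = c` forces `σ⁻¹` to sort the row `a_k` decreasingly, and the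
decreasing sorts of a nonconstant row form a coset of its stabilizer, of order at most
`m! (n - m)! ≤ (n - 1)!` where `m` is the multiplicity of one of its values. Double counting
the pairs `(σ, k)` with `(v_σ)_k = c` gives `n! μ ≤ n (n - 1)!`, so `μ = 1`, the sets of
decreasing sorts of the rows are disjoint, and each has exactly `(n - 1)!` elements; they are
the sets `I_M(a_k, α)`. Finally `m! (n - m)! < (n - 1)!` for `2 ≤ m ≤ n - 2`, which pins down
the shape of a row whose stabilizer has order `(n - 1)!`.
-/

open Finset Equiv
open scoped Nat

namespace Maj

variable {n : ℕ} {x y : Fin n → ℝ} {c : ℝ}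

lemma le_of_forall_le (h : Maj x y) (hy : ∀ j, y j ≤ c) (i : Fin n) : x i ≤ c := by
  obtain ⟨B, ⟨hB0, hBrow, -⟩, rfl⟩ := h
  calc (B *ᵥ y) i = ∑ j, B i j * y j := rfl
    _ ≤ ∑ j, B i j * c := by gcongr with j; exacts [hB0 i j, hy j]
    _ = c := by rw [← sum_mul, hBrow i, one_mul]

-- A row of a doubly stochastic matrix averaging `y` to its maximum `c` lives on `{y = c}`.
lemma card_filter_eq_le (h : Maj x y) (hy : ∀ j, y j ≤ c) :
    #{i | x i = c} ≤ #{j | y j = c} := by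
  obtain ⟨B, ⟨hB0, hBrow, hBcol⟩, rfl⟩ := h
  have hsupp : ∀ i, (B *ᵥ y) i = c → ∑ j with y j = c, B i j = 1 := by
    intro i hi
    have hdefect : ∑ j, B i j * (c - y j) = 0 := by
      simp only [mul_sub, sum_sub_distrib, ← sum_mul, hBrow i, one_mul]
      exact sub_eq_zero.mpr hi.symm
    have hzero := (sum_eq_zero_iff_of_nonneg fun j _ =>
      mul_nonneg (hB0 i j) (sub_nonneg.mpr (hy j))).mp hdefect
    rw [sum_filter_of_ne fun j _ hj => ?_, hBrow i]
    by_contra hne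
    rcases mul_eq_zero.mp (hzero j (mem_univ j)) with h | h
    exacts [hj h, hne (sub_eq_zero.mp h).symm]
  have : (#{i | (B *ᵥ y) i = c} : ℝ) ≤ #{j | y j = c} :=
    calc (#{i | (B *ᵥ y) i = c} : ℝ)
        = ∑ i with (B *ᵥ y) i = c, ∑ j with y j = c, B i j := by
          rw [sum_congr rfl fun i hi => hsupp i (mem_filter.mp hi).2]; simp
      _ ≤ ∑ i, ∑ j with y j = c, B i j :=
          sum_le_sum_of_subset_of_nonneg (filter_subset _ _) fun i _ _ =>
            sum_nonneg fun j _ => hB0 i j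
      _ = ∑ j with y j = c, ∑ i, B i j := sum_comm
      _ = #{j | y j = c} := by simp [hBcol]
  exact_mod_cast this

end Maj

lemma MajEq.forall_le_and_card_filter_eq {n : ℕ} {x y : Fin n → ℝ} {c : ℝ} (h : MajEq x y)
    (hy : ∀ j, y j ≤ c) : (∀ i, x i ≤ c) ∧ #{i | x i = c} = #{j | y j = c} :=
  have hx := h.1.le_of_forall_le hy
  ⟨hx, le_antisymm (h.1.card_filter_eq_le hy) (h.2.card_filter_eq_le hx)⟩

lemma exists_forall_le_and_card_filter_eq {ι : Type*} {n : ℕ} (hn : 0 < n)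
    {v : ι → Fin n → ℝ} {w : Fin n → ℝ} (h : ∀ r, MajEq (v r) w) :
    ∃ c μ, 0 < μ ∧ ∀ r, (∀ k, v r k ≤ c) ∧ #{k | v r k = c} = μ := by
  have hne : (univ : Finset (Fin n)).Nonempty := ⟨⟨0, hn⟩, mem_univ _⟩
  obtain ⟨k₀, -, hk₀⟩ := exists_mem_eq_sup' hne w
  refine ⟨univ.sup' hne w, #{k | w k = univ.sup' hne w}, card_pos.mpr ⟨k₀, by simp [hk₀]⟩,
    fun r => (h r).forall_le_and_card_filter_eq fun k => le_sup' w (mem_univ k)⟩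

namespace Nat

lemma factorial_mul_factorial_le_factorial_add (a b : ℕ) :
    (a + 1)! * (b + 1)! ≤ (a + b + 1)! := by
  induction a with
  | zero => simp
  | succ a ih =>
    rw [show a + 1 + b + 1 = a + b + 1 + 1 by omega]
    calc (a + 2)! * (b + 1)! = (a + 2) * ((a + 1)! * (b + 1)!) := by
          rw [factorial_succ (a + 1), mul_assoc]
      _ ≤ (a + b + 2) * (a + b + 1)! := by gcongr; omega
      _ = (a + b + 1 + 1)! := (factorial_succ _).symm

lemma factorial_mul_factorial_lt_factorial_add (a b : ℕ) :
    (a + 2)! * (b + 2)! < (a + b + 3)! := by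
  calc (a + 2)! * (b + 2)! = (a + 2) * ((a + 1)! * (b + 1 + 1)!) := by
        rw [factorial_succ (a + 1), mul_assoc]
    _ ≤ (a + 2) * (a + b + 2)! := by
        gcongr; exact (factorial_mul_factorial_le_factorial_add a (b + 1)).trans_eq (by ring_nf)
    _ < (a + b + 3) * (a + b + 2)! := by gcongr; omega
    _ = (a + b + 3)! := (factorial_succ _).symm

end Nat

lemma injective_permMatrix_inv (ι : Type*) [DecidableEq ι] :
    Function.Injective fun σ : Perm ι => σ⁻¹.permMatrix ℝ := fun σ τ h =>
  inv_injective <| Equiv.ext fun i => Option.some_injective _ <| by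
    simpa only [toPEquiv_apply] using congr($(PEquiv.toMatrix_injective h) i)

section Sorting

variable {n : ℕ}

noncomputable def decSortPerm (x : Fin n → ℝ) : Perm (Fin n) :=
  Fin.revPerm.trans (Tuple.sort x)

lemma decSort_eq_comp (x : Fin n → ℝ) : decSort x = x ∘ decSortPerm x := rfl

lemma antitone_decSort (x : Fin n → ℝ) : Antitone (decSort x) := fun _ _ hij =>
  Tuple.monotone_sort x (Fin.rev_le_rev.mpr hij)

lemma decSort_eq_self {α : Fin n → ℝ} (hα : Antitone α) : decSort α = α :=
  Tuple.unique_antitone (σ := decSortPerm α) (τ := 1) (antitone_decSort α) hα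

noncomputable def decSortPerms (x : Fin n → ℝ) : Finset (Perm (Fin n)) :=
  {ρ | Antitone (x ∘ ρ)}

-- Decreasing sorts of `x` form a coset of its stabilizer.
lemma card_decSortPerms (x : Fin n → ℝ) :
    #(decSortPerms x) = Fintype.card {π : Perm (Fin n) // x ∘ π = x} := by
  rw [decSortPerms, ← Fintype.card_subtype]
  refine Fintype.card_congr (subtypeEquiv (Equiv.mulRight (decSortPerm x)⁻¹) fun ρ => ?_)
  have hstab : x ∘ ⇑(ρ * (decSortPerm x)⁻¹) = x ↔ x ∘ ρ = decSort x := by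
    rw [decSort_eq_comp]
    constructor
    · intro h; ext i; simpa using congrFun h (decSortPerm x i)
    · intro h; ext i; simpa using congrFun h ((decSortPerm x)⁻¹ i)
  rw [coe_mulRight, hstab]
  exact ⟨fun h => Tuple.unique_antitone (τ := decSortPerm x) h (antitone_decSort x),
    fun h => h ▸ antitone_decSort x⟩

variable {α : Fin n → ℝ}

lemma monovary_iff_antitone (hα : StrictAnti α) {f : Fin n → ℝ} : Monovary f α ↔ Antitone f :=
  ⟨fun h _ _ hij => hij.eq_or_lt.elim (fun h' => (congrArg f h').ge) fun h' => h (hα h'),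
    fun h _ _ hab => h (hα.lt_iff_gt.mp hab).le⟩

lemma sum_comp_perm_mul_le_sum_decSort_mul (hα : StrictAnti α) (x : Fin n → ℝ)
    (ρ : Perm (Fin n)) : ∑ i, x (ρ i) * α i ≤ ∑ i, decSort x i * α i := by
  simpa [decSort_eq_comp] using ((monovary_iff_antitone hα).mpr (antitone_decSort x)
    ).sum_comp_perm_mul_le_sum_mul (σ := ρ.trans (decSortPerm x).symm)

lemma sum_comp_perm_mul_eq_sum_decSort_mul_iff (hα : StrictAnti α) (x : Fin n → ℝ)
    (ρ : Perm (Fin n)) : ∑ i, x (ρ i) * α i = ∑ i, decSort x i * α i ↔ Antitone (x ∘ ρ) := by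
  have h := ((monovary_iff_antitone hα).mpr (antitone_decSort x)
    ).sum_comp_perm_mul_eq_sum_mul_iff (σ := ρ.trans (decSortPerm x).symm)
  have hcomp : decSort x ∘ ρ.trans (decSortPerm x).symm = x ∘ ρ := by
    ext i; simp [decSort_eq_comp]
  rw [hcomp, monovary_iff_antitone hα] at h
  simpa [decSort_eq_comp] using h

lemma antitone_comp_of_forall_sum_le (hα : StrictAnti α) {x : Fin n → ℝ} {ρ : Perm (Fin n)}
    (hρ : ∀ ρ' : Perm (Fin n), ∑ i, x (ρ' i) * α i ≤ ∑ i, x (ρ i) * α i) : Antitone (x ∘ ρ) :=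
  (sum_comp_perm_mul_eq_sum_decSort_mul_iff hα x ρ).mp <|
    (sum_comp_perm_mul_le_sum_decSort_mul hα x ρ).antisymm (hρ (decSortPerm x))

lemma IM_eq_image (hα : StrictAnti α) (x : Fin n → ℝ) :
    IM x α = (fun ρ : Perm (Fin n) => ρ⁻¹.permMatrix ℝ) '' decSortPerms x := by
  ext P
  simp only [IM, IsPermMatrix, decSort_eq_self hα.antitone, Set.mem_image,
    decSortPerms, coe_filter, mem_univ, true_and]
  constructor
  · rintro ⟨⟨σ, rfl⟩, h⟩
    refine ⟨σ⁻¹, (sum_comp_perm_mul_eq_sum_decSort_mul_iff hα x σ⁻¹).mp ?_, inv_inv σ ▸ rfl⟩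
    simpa [Matrix.permMatrix_mulVec] using h
  · rintro ⟨ρ, hρ, rfl⟩
    refine ⟨⟨ρ⁻¹, rfl⟩, ?_⟩
    simpa [Matrix.permMatrix_mulVec] using (sum_comp_perm_mul_eq_sum_decSort_mul_iff hα x ρ).mpr hρ

lemma ncard_IM (hα : StrictAnti α) (x : Fin n → ℝ) : (IM x α).ncard = #(decSortPerms x) := by
  rw [IM_eq_image hα, Set.ncard_image_of_injective _ (injective_permMatrix_inv _),
    Set.ncard_coe_finset]

lemma IM_inter_IM_eq_empty (hα : StrictAnti α) {x y : Fin n → ℝ}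
    (h : Disjoint (decSortPerms x) (decSortPerms y)) : IM x α ∩ IM y α = ∅ := by
  rw [IM_eq_image hα, IM_eq_image hα, ← Set.image_inter (injective_permMatrix_inv _),
    ← coe_inter, disjoint_iff_inter_eq_empty.mp h, coe_empty, Set.image_empty]

end Sorting

section Stabilizer

variable {ι κ : Type*} [Fintype ι] [DecidableEq κ]

lemma card_stabilizer_le_factorial_mul_factorial [DecidableEq ι] (y : ι → κ) (v : κ) :
    Fintype.card {π : Perm ι // y ∘ π = y} ≤
      (#{i | y i = v})! * (Fintype.card ι - #{i | y i = v})! := by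
  let p : ι → Bool := fun i => decide (y i = v)
  calc Fintype.card {π : Perm ι // y ∘ π = y} ≤ Fintype.card {π : Perm ι // p ∘ π = p} :=
        Fintype.card_le_of_injective
          (Subtype.map id fun π h => by ext i; simp [p, show y (π i) = y i from congrFun h i])
          (Subtype.map_injective _ Function.injective_id)
    _ = _ := by
        rw [DomMulAct.stabilizer_card]
        simp [p, Fintype.card_subtype, filter_not, card_sdiff_of_subset (filter_subset _ _)]

lemma card_filter_eq_pos_and_lt {y : ι → κ} {a b : ι} (hab : y a ≠ y b) :
    0 < #{i | y i = y a} ∧ #{i | y i = y a} < Fintype.card ι :=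
  ⟨card_pos.mpr ⟨a, by simp⟩, card_lt_univ_of_notMem (x := b) (by simpa using hab.symm)⟩

lemma card_stabilizer_le_factorial_pred {n : ℕ} {y : Fin n → κ} {a b : Fin n} (hab : y a ≠ y b) :
    Fintype.card {π : Perm (Fin n) // y ∘ π = y} ≤ (n - 1)! := by
  obtain ⟨hpos, hlt⟩ := card_filter_eq_pos_and_lt hab
  rw [Fintype.card_fin] at hlt
  obtain ⟨a', ha'⟩ : ∃ a', #{i | y i = y a} = a' + 1 := ⟨_, (Nat.succ_pred_eq_of_pos hpos).symm⟩
  obtain ⟨b', hb'⟩ : ∃ b', n - #{i | y i = y a} = b' + 1 := ⟨n - #{i | y i = y a} - 1, by omega⟩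
  have := card_stabilizer_le_factorial_mul_factorial y (y a)
  rw [Fintype.card_fin, hb', ha'] at this
  exact this.trans (by rw [show n - 1 = a' + b' + 1 by omega]; exact
    Nat.factorial_mul_factorial_le_factorial_add a' b')

lemma card_fiber_eq_one_or_pred {n : ℕ} {y : Fin n → κ} {i b : Fin n} (hib : y i ≠ y b)
    (hstab : (n - 1)! ≤ Fintype.card {π : Perm (Fin n) // y ∘ π = y}) :
    #{k | y k = y i} = 1 ∨ #{k | y k = y i} = n - 1 := by
  obtain ⟨hpos, hlt⟩ := card_filter_eq_pos_and_lt hib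
  rw [Fintype.card_fin] at hlt
  by_contra! hmid
  obtain ⟨a', ha'⟩ : ∃ a', #{k | y k = y i} = a' + 2 := ⟨#{k | y k = y i} - 2, by omega⟩
  obtain ⟨c', hc'⟩ : ∃ c', n - #{k | y k = y i} = c' + 2 := ⟨n - #{k | y k = y i} - 2, by omega⟩
  have hle := card_stabilizer_le_factorial_mul_factorial y (y i)
  rw [Fintype.card_fin, hc', ha'] at hle
  have hlt' := Nat.factorial_mul_factorial_lt_factorial_add a' c'
  rw [show a' + c' + 3 = n - 1 by omega] at hlt'
  omega

-- If no value occurred `n - 1` times, every value would occur once and the stabilizer would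
-- be trivial.
lemma exists_eq_of_factorial_pred_le_card_stabilizer {n : ℕ} (hn : 3 ≤ n) {y : Fin n → κ}
    {a b : Fin n} (hab : y a ≠ y b)
    (hstab : (n - 1)! ≤ Fintype.card {π : Perm (Fin n) // y ∘ π = y}) :
    ∃ (lam gam : κ) (j : Fin n), lam ≠ gam ∧ y j = gam ∧ ∀ i, i ≠ j → y i = lam := by
  have hmult : ∀ i, #{k | y k = y i} = 1 ∨ #{k | y k = y i} = n - 1 := by
    intro i
    by_cases hia : y i = y a
    exacts [card_fiber_eq_one_or_pred (hia ▸ hab) hstab, card_fiber_eq_one_or_pred hia hstab]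
  by_cases hbig : ∃ i, #{k | y k = y i} = n - 1
  · obtain ⟨i, hi⟩ := hbig
    have hcompl : #{k | y k ≠ y i} = 1 := by
      have := card_filter_add_card_filter_not (s := univ) (fun k => y k = y i)
      rw [card_univ, Fintype.card_fin, hi] at this
      simp only [ne_eq]
      omega
    obtain ⟨j, hj⟩ := card_eq_one.mp hcompl
    have hmem : ∀ k, y k ≠ y i ↔ k = j := fun k => by
      simpa using congrArg (k ∈ ·) hj
    exact ⟨y i, y j, j, fun h => (hmem j).mpr rfl h.symm, rfl,
      fun k hk => not_not.mp fun h => hk ((hmem k).mp h)⟩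
  · simp only [not_exists] at hbig
    have hinj : Function.Injective y := fun i k hik => by
      obtain ⟨l, hl⟩ := card_eq_one.mp ((hmult i).resolve_right (hbig i))
      have hmem : ∀ k, y k = y i ↔ k = l := fun k => by simpa using congrArg (k ∈ ·) hl
      exact ((hmem i).mp rfl).trans ((hmem k).mp hik.symm).symm
    have htriv : Fintype.card {π : Perm (Fin n) // y ∘ π = y} ≤ 1 :=
      Fintype.card_le_one_iff.mpr fun π π' => Subtype.ext <| Equiv.ext fun i =>
        (hinj (congrFun π.2 i)).trans (hinj (congrFun π'.2 i)).symm
    have := Nat.factorial_le (show 2 ≤ n - 1 by omega)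
    simp only [Nat.factorial_two] at this
    omega

end Stabilizer

lemma card_eq_of_card_filter_mem_eq {ι β : Type*} [Fintype ι] [Fintype β] [DecidableEq β]
    (T : ι → Finset β) {N μ : ℕ} (hβ : Fintype.card β = Fintype.card ι * N)
    (hβ0 : 0 < Fintype.card β) (hT : ∀ k, #(T k) ≤ N) (hμ : ∀ b, #{k | b ∈ T k} = μ)
    (hμ0 : 0 < μ) : μ = 1 ∧ ∀ k, #(T k) = N := by
  have hdouble : ∑ k, #(T k) = Fintype.card β * μ := by
    simpa [bipartiteAbove, bipartiteBelow, hμ, mul_comm] using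
      sum_card_bipartiteAbove_eq_sum_card_bipartiteBelow (s := univ) (t := univ)
        (r := fun k b => b ∈ T k)
  have hle : ∑ k, #(T k) ≤ ∑ _k : ι, N := sum_le_sum fun k _ => hT k
  rw [sum_const, card_univ, smul_eq_mul, ← hβ, hdouble] at hle
  have hμ1 : μ = 1 := le_antisymm (by nlinarith) hμ0
  refine ⟨hμ1, fun k => ?_⟩
  refine (sum_eq_sum_iff_of_le fun k _ => hT k).mp ?_ k (mem_univ k)
  rw [hdouble, hμ1, sum_const, card_univ, smul_eq_mul, hβ, mul_one]

lemma card_decSortPerms_rows {n : ℕ} (hn : 0 < n) {α : Fin n → ℝ} (hα : StrictAnti α)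
    {A : Matrix (Fin n) (Fin n) ℝ}
    (hA : ∀ P : Matrix (Fin n) (Fin n) ℝ, IsPermMatrix P → MajEq (A *ᵥ (P *ᵥ α)) (A *ᵥ α))
    (hrow : ∀ k, ∃ j j', A k j ≠ A k j') :
    (∀ k, #(decSortPerms (A k)) = (n - 1)!) ∧
      Pairwise fun l k => Disjoint (decSortPerms (A l)) (decSortPerms (A k)) := by
  have hscore (ρ : Perm (Fin n)) :
      A *ᵥ (ρ⁻¹.permMatrix ℝ *ᵥ α) = fun k => ∑ i, A k (ρ i) * α i := by
    ext k
    simp only [mulVec, dotProduct]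
    exact Fintype.sum_equiv ρ⁻¹ _ _ fun i => by simp
  obtain ⟨c, μ, hμ, hc⟩ := exists_forall_le_and_card_filter_eq hn
    (v := fun ρ k => ∑ i, A k (ρ i) * α i) fun ρ => hscore ρ ▸ hA _ ⟨ρ⁻¹, rfl⟩
  let T k : Finset (Perm (Fin n)) := {ρ | ∑ i, A k (ρ i) * α i = c}
  have hT k : T k ⊆ decSortPerms (A k) := fun ρ hρ => by
    simp only [T, decSortPerms, mem_filter, mem_univ, true_and] at hρ ⊢
    exact antitone_comp_of_forall_sum_le hα fun ρ' => hρ ▸ (hc ρ').1 k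
  have hsorts k : #(decSortPerms (A k)) ≤ (n - 1)! := by
    obtain ⟨j, j', h⟩ := hrow k
    exact (card_decSortPerms _).trans_le (card_stabilizer_le_factorial_pred h)
  obtain ⟨hμ1, hTcard⟩ := card_eq_of_card_filter_mem_eq T (N := (n - 1)!)
    (by simp [Fintype.card_perm, Nat.mul_factorial_pred hn.ne']) Fintype.card_pos
    (fun k => (card_le_card (hT k)).trans (hsorts k))
    (fun ρ => by simpa only [T, mem_filter, mem_univ, true_and] using (hc ρ).2) hμ
  have hTeq k : T k = decSortPerms (A k) :=
    eq_of_subset_of_card_le (hT k) ((hsorts k).trans (hTcard k).ge)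
  refine ⟨fun k => hTeq k ▸ hTcard k, fun l k hlk => ?_⟩
  have hdisjT : Disjoint (T l) (T k) := disjoint_left.mpr fun ρ hl hk =>
    hlk (card_le_one.mp ((hc ρ).2.trans hμ1).le l (by simpa [T] using hl) k
      (by simpa [T] using hk))
  simpa only [hTeq] using hdisjT

theorem rows_almost_constant_general {n : ℕ} (hn : 3 ≤ n) (α : Fin n → ℝ) (hα : StrictAnti α)
    (A : Matrix (Fin n) (Fin n) ℝ)
    (hA : ∀ P : Matrix (Fin n) (Fin n) ℝ, IsPermMatrix P →
      MajEq (A *ᵥ (P *ᵥ α)) (A *ᵥ α))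
    (hrow : ∀ i : Fin n, ∃ j j' : Fin n, A i j ≠ A i j') :
    (∀ l : Fin n, ∃ (lam gam : ℝ) (j : Fin n), lam ≠ gam ∧ A l j = gam ∧
      ∀ i : Fin n, i ≠ j → A l i = lam) ∧
    (∀ l k : Fin n, l ≠ k → IM (A l) α ∩ IM (A k) α = ∅) ∧
    (∀ l : Fin n, (IM (A l) α).ncard = (n - 1).factorial) ∧
    (∑ l : Fin n, (IM (A l) α).ncard = n.factorial) := by
  obtain ⟨hcard, hdisj⟩ := card_decSortPerms_rows (by omega) hα hA hrow
  have hIM l : (IM (A l) α).ncard = (n - 1)! := (ncard_IM hα _).trans (hcard l)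
  refine ⟨fun l => ?_, fun l k hlk => ?_, hIM, ?_⟩
  · obtain ⟨j, j', h⟩ := hrow l
    exact exists_eq_of_factorial_pred_le_card_stabilizer hn h
      ((hcard l).symm.trans (card_decSortPerms _)).le
  · exact IM_inter_IM_eq_empty hα (hdisj hlk)
  · simp [hIM, Nat.mul_factorial_pred (show n ≠ 0 by omega)]

/-- Claim 2, Step 2: if every row of `A` is nonconstant, then each
row is constant except in exactly one coordinate; moreover the sets `I_M(aₗ, α)`
are pairwise disjoint, each of cardinality `(n-1)!`, with cardinalities summing
to `n!`. -/
theorem rows_almost_constant {n : ℕ} (hn : 3 ≤ n) (α : Fin n → ℝ) (hα : StrictAnti α)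
    (A : Matrix (Fin n) (Fin n) ℝ) (hpos : ∀ i j, 0 < A i j)
    (hA : ∀ P : Matrix (Fin n) (Fin n) ℝ, IsPermMatrix P →
      MajEq (A *ᵥ (P *ᵥ α)) (A *ᵥ α))
    (hrow : ∀ i : Fin n, ∃ j j' : Fin n, A i j ≠ A i j') :
    (∀ l : Fin n, ∃ (lam gam : ℝ) (j : Fin n), lam ≠ gam ∧ A l j = gam ∧
      ∀ i : Fin n, i ≠ j → A l i = lam) ∧
    (∀ l k : Fin n, l ≠ k → IM (A l) α ∩ IM (A k) α = ∅) ∧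
    (∀ l : Fin n, (IM (A l) α).ncard = (n - 1).factorial) ∧
    (∑ l : Fin n, (IM (A l) α).ncard = n.factorial) :=
  rows_almost_constant_general hn α hα A hA hrow
end

section
/- (Theorem 1.1, Ando) Let n ≥ 1. A linear map Φ : ℝⁿ → ℝⁿ satisfies Φ(x) ≺ Φ(y) whenever x ≺ y if and only if one of the following holds: (1) there exists a ∈ ℝⁿ such that Φ(x) = (Σᵢ xᵢ)·a for all x; or (2) there exist real numbers c, d and an n×n permutation matrix P such that Φ(x) = c·(P *ᵥ x) + d·(Σᵢ xᵢ)·e for all x, where e = (1, 1, …, 1) ∈ ℝⁿ. -/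
open Matrix BigOperators

/-!
If `Φ` preserves majorization, then `Φ (y ∘ σ)` and `Φ y` majorize each other, because `y ∘ σ`
and `y` do. Mutual majorization forces a rearrangement (equality case of Jensen's inequality for
`t ↦ t²`), and since `ℝⁿ` is not a finite union of proper subspaces, the rearrangement `ρ` with
`Φ (y ∘ σ) = Φ y ∘ ρ` can be chosen independently of `y`. So permuting the columns of the matrix
of `Φ` amounts to permuting its rows. Then either all columns coincide, which is the first form, or they are pairwise
distinct and every rearrangement of a column is again a column. A vector with at most `n`
rearrangements is constant off one coordinate, which gives the second form.
-/

open Finset Equiv Function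

section Rearrangement

variable {ι α : Type*}

theorem exists_perm_eq_comp_of_card_fiber_eq [Fintype ι] [DecidableEq α] {x y : ι → α}
    (h : ∀ t, #{i | x i = t} = #{i | y i = t}) : ∃ σ : Perm ι, x = y ∘ σ := by
  have e (t : α) : {i // x i = t} ≃ {i // y i = t} :=
    Fintype.equivOfCardEq (by simpa only [Fintype.card_subtype] using h t)
  exact ⟨ofFiberEquiv e, funext fun i => (ofFiberEquiv_map e i).symm⟩

variable [DecidableEq ι]

def rearrangements [Fintype ι] [DecidableEq α] (v : ι → α) : Finset (ι → α) :=
  univ.image fun σ : Perm ι => v ∘ σ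

theorem comp_swap_apply_ne_iff {v : ι → α} {k l : ι} (h : v k ≠ v l) (m : ι) :
    (v ∘ swap k l) m ≠ v m ↔ m = k ∨ m = l := by
  rcases eq_or_ne m k with rfl | hk
  · simp [Ne.symm h]
  rcases eq_or_ne m l with rfl | hl
  · simp [h]
  simp [swap_apply_of_ne_of_ne hk hl, hk, hl]

theorem eq_or_eq_swap_of_comp_swap_eq {v : ι → α} {k l k' l' : ι} (h : v k ≠ v l)
    (h' : v k' ≠ v l') (heq : v ∘ swap k' l' = v ∘ swap k l) :
    (k', l') = (k, l) ∨ (k', l') = (l, k) := by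
  have hsupp (m : ι) : m = k' ∨ m = l' ↔ m = k ∨ m = l := by
    rw [← comp_swap_apply_ne_iff h', ← comp_swap_apply_ne_iff h, heq]
  have hk'l' : k' ≠ l' := fun e => h' (e ▸ rfl)
  grind [hsupp k', hsupp l', hsupp k]

/-- Each transposition of two coordinates carrying different values yields its own
rearrangement. If `v` is not constant off a point, every coordinate differs from at least two
others, so there are at least `card ι` such transpositions. -/
theorem exists_forall_ne_eq_of_card_rearrangements_le [Fintype ι] [DecidableEq α] {v : ι → α}
    (h : #(rearrangements v) ≤ Fintype.card ι) : ∃ i₀ d, ∀ i, i ≠ i₀ → v i = d := by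
  by_contra! H
  have two_le_card_ne (k : ι) : 2 ≤ #{l | v k ≠ v l} := by
    by_contra! hk
    have : Nonempty ι := ⟨k⟩
    obtain ⟨i₀, hi₀⟩ := card_le_one_iff_subset_singleton.1 (Nat.lt_succ_iff.1 hk)
    obtain ⟨i, hi, hvi⟩ := H i₀ (v k)
    exact hi (mem_singleton.1 (hi₀ (by simpa [eq_comm] using hvi)))
  set E : Finset (ι × ι) := {p | v p.1 ≠ v p.2}
  set f : ι × ι → (ι → α) := fun p => v ∘ swap p.1 p.2
  have card_E : 2 * Fintype.card ι ≤ #E := by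
    calc 2 * Fintype.card ι = ∑ _k : ι, 2 := by simp [mul_comm]
      _ ≤ ∑ k, #{l | v k ≠ v l} := sum_le_sum fun k _ => two_le_card_ne k
      _ = #E := by simp only [E, card_filter, Fintype.sum_prod_type]
  have card_E_le : #E ≤ 2 * #(E.image f) := by
    refine card_le_mul_card_image _ 2 fun w hw => ?_
    obtain ⟨⟨k, l⟩, hkl, rfl⟩ := mem_image.1 hw
    calc #{p ∈ E | f p = f (k, l)} ≤ #{(k, l), (l, k)} := by
          refine card_le_card fun p hp => ?_
          obtain ⟨hpE, hpf⟩ := mem_filter.1 hp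
          simpa using eq_or_eq_swap_of_comp_swap_eq (mem_filter.1 hkl).2 (mem_filter.1 hpE).2 hpf
      _ ≤ 2 := card_le_two
  have image_subset : E.image f ⊆ (rearrangements v).erase v := by
    intro w hw
    obtain ⟨⟨k, l⟩, hkl, rfl⟩ := mem_image.1 hw
    have hkl : v k ≠ v l := (mem_filter.1 hkl).2
    refine mem_erase.2 ⟨fun he => ?_, mem_image_of_mem _ (mem_univ _)⟩
    exact (comp_swap_apply_ne_iff hkl k).2 (Or.inl rfl) (congrFun he k)
  have v_mem : v ∈ rearrangements v := mem_image.2 ⟨1, mem_univ _, rfl⟩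
  have card_image := card_le_card image_subset
  rw [card_erase_of_mem v_mem] at card_image
  have := card_pos.2 ⟨v, v_mem⟩
  omega

end Rearrangement

section DoublyStochastic

variable {ι : Type*} [Fintype ι] [DecidableEq ι] {A : Matrix ι ι ℝ}

theorem ConvexOn.map_mulVec_apply_le {f : ℝ → ℝ} (hf : ConvexOn ℝ Set.univ f)
    (hA : A ∈ doublyStochastic ℝ ι) (y : ι → ℝ) (i : ι) :
    f ((A *ᵥ y) i) ≤ ∑ j, A i j * f (y j) := by
  simpa [mulVec, dotProduct] using hf.map_sum_le (t := univ) (w := A i) (p := y)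
    (fun _ _ => nonneg_of_mem_doublyStochastic hA) (sum_row_of_mem_doublyStochastic hA i)
    (fun _ _ => Set.mem_univ _)

theorem sum_sum_mul_of_mem_doublyStochastic (hA : A ∈ doublyStochastic ℝ ι) (z : ι → ℝ) :
    ∑ i, ∑ j, A i j * z j = ∑ j, z j := by
  rw [sum_comm]
  simp [← sum_mul, sum_col_of_mem_doublyStochastic hA]

theorem ConvexOn.sum_map_mulVec_le {f : ℝ → ℝ} (hf : ConvexOn ℝ Set.univ f)
    (hA : A ∈ doublyStochastic ℝ ι) (y : ι → ℝ) :
    ∑ i, f ((A *ᵥ y) i) ≤ ∑ j, f (y j) :=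
  (sum_le_sum fun i _ => hf.map_mulVec_apply_le hA y i).trans
    (sum_sum_mul_of_mem_doublyStochastic hA _).le

theorem StrictConvexOn.mulVec_apply_eq_of_sum_le {f : ℝ → ℝ} (hf : StrictConvexOn ℝ Set.univ f)
    (hA : A ∈ doublyStochastic ℝ ι) {y : ι → ℝ} (hle : ∑ j, f (y j) ≤ ∑ i, f ((A *ᵥ y) i))
    {i j : ι} (hij : A i j ≠ 0) : (A *ᵥ y) i = y j := by
  have jensen := hf.convexOn.map_mulVec_apply_le hA y
  have rows : ∑ i, f ((A *ᵥ y) i) = ∑ i, ∑ j, A i j * f (y j) :=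
    le_antisymm (sum_le_sum fun i _ => jensen i)
      ((sum_sum_mul_of_mem_doublyStochastic hA _).trans_le hle)
  have row_eq : f (∑ k, A i k • y k) = ∑ k, A i k • f (y k) := by
    simpa [mulVec, dotProduct] using
      (sum_eq_sum_iff_of_le fun i _ => jensen i).1 rows i (mem_univ i)
  have const_on_support := (hf.map_sum_eq_iff_of_nonneg
    (fun _ _ => nonneg_of_mem_doublyStochastic hA) (sum_row_of_mem_doublyStochastic hA i)
    (fun _ _ => Set.mem_univ _)).1 row_eq
  calc (A *ᵥ y) i = ∑ k, A i k * y j := by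
        simp only [mulVec, dotProduct]
        refine sum_congr rfl fun k _ => ?_
        rcases eq_or_ne (A i k) 0 with hk | hk
        · simp [hk]
        · rw [const_on_support (mem_univ k) hk (mem_univ j) hij]
    _ = y j := by rw [← sum_mul, sum_row_of_mem_doublyStochastic hA i, one_mul]

theorem comp_mulVec_eq_mulVec_comp (hA : A ∈ doublyStochastic ℝ ι) {y : ι → ℝ}
    (hsupp : ∀ i j, A i j ≠ 0 → (A *ᵥ y) i = y j) (g : ℝ → ℝ) :
    g ∘ (A *ᵥ y) = A *ᵥ (g ∘ y) := by
  funext i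
  calc g ((A *ᵥ y) i) = ∑ j, A i j * g ((A *ᵥ y) i) := by
        rw [← sum_mul, sum_row_of_mem_doublyStochastic hA i, one_mul]
    _ = ∑ j, A i j * g (y j) := by
        refine sum_congr rfl fun j _ => ?_
        rcases eq_or_ne (A i j) 0 with hj | hj
        · simp [hj]
        · rw [hsupp i j hj]

end DoublyStochastic

section Majorization

variable {n : ℕ} {x y : Fin n → ℝ}

theorem isDoublyStochastic_iff {A : Matrix (Fin n) (Fin n) ℝ} :
    IsDoublyStochastic A ↔ A ∈ doublyStochastic ℝ (Fin n) :=
  mem_doublyStochastic_iff_sum.symm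

theorem maj_iff : Maj x y ↔ ∃ A ∈ doublyStochastic ℝ (Fin n), x = A *ᵥ y := by
  simp only [Maj, isDoublyStochastic_iff]

theorem Maj.refl (x : Fin n → ℝ) : Maj x x :=
  maj_iff.2 ⟨1, one_mem _, (one_mulVec x).symm⟩

theorem maj_comp_perm (y : Fin n → ℝ) (σ : Perm (Fin n)) : Maj (y ∘ σ) y :=
  maj_iff.2 ⟨σ.permMatrix ℝ, permMatrix_mem_doublyStochastic, (permMatrix_mulVec (σ := σ)).symm⟩

theorem maj_of_comp_perm (y : Fin n → ℝ) (σ : Perm (Fin n)) : Maj y (y ∘ σ) := by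
  simpa [comp_assoc] using maj_comp_perm (y ∘ σ) σ⁻¹

theorem Maj.sum_eq (h : Maj x y) : ∑ i, x i = ∑ i, y i := by
  obtain ⟨A, hA, rfl⟩ := maj_iff.1 h
  exact sum_mulVec_of_mem_doublyStochastic hA

theorem Maj.smul (h : Maj x y) (c : ℝ) : Maj (c • x) (c • y) := by
  obtain ⟨A, hA, rfl⟩ := maj_iff.1 h
  exact maj_iff.2 ⟨A, hA, (mulVec_smul A c y).symm⟩

theorem Maj.add_smul_one (h : Maj x y) (k : ℝ) :
    Maj (x + k • fun _ => 1) (y + k • fun _ => 1) := by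
  obtain ⟨A, hA, rfl⟩ := maj_iff.1 h
  refine maj_iff.2 ⟨A, hA, ?_⟩
  rw [mulVec_add, mulVec_smul, ← Pi.one_def, mulVec_one_of_mem_doublyStochastic hA]

theorem Maj.comp_perm (h : Maj x y) (σ : Perm (Fin n)) : Maj (x ∘ σ) (y ∘ σ) := by
  obtain ⟨A, hA, rfl⟩ := maj_iff.1 h
  refine maj_iff.2 ⟨A.submatrix σ σ, ?_, ?_⟩
  · exact reindex_mem_doublyStochastic (e₁ := σ.symm) (e₂ := σ.symm) hA
  · rw [submatrix_mulVec_equiv]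
    simp [comp_assoc]

theorem Maj.sum_le_sum_of_convexOn {f : ℝ → ℝ} (hf : ConvexOn ℝ Set.univ f) (h : Maj x y) :
    ∑ i, f (x i) ≤ ∑ i, f (y i) := by
  obtain ⟨A, hA, rfl⟩ := maj_iff.1 h
  exact hf.sum_map_mulVec_le hA y

theorem exists_perm_of_maj_of_maj (hxy : Maj x y) (hyx : Maj y x) :
    ∃ σ : Perm (Fin n), x = y ∘ σ := by
  have hsq : StrictConvexOn ℝ Set.univ fun t : ℝ => t ^ 2 :=
    even_two.strictConvexOn_pow two_ne_zero
  have hle := hyx.sum_le_sum_of_convexOn hsq.convexOn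
  obtain ⟨A, hA, rfl⟩ := maj_iff.1 hxy
  have hsupp (i j : Fin n) : A i j ≠ 0 → (A *ᵥ y) i = y j :=
    hsq.mulVec_apply_eq_of_sum_le hA hle
  refine exists_perm_eq_comp_of_card_fiber_eq fun t => ?_
  have hsum := sum_mulVec_of_mem_doublyStochastic hA (x := (fun s => if s = t then 1 else 0) ∘ y)
  rw [← comp_mulVec_eq_mulVec_comp hA hsupp] at hsum
  have : (#{i | (A *ᵥ y) i = t} : ℝ) = #{i | y i = t} := by
    simpa only [natCast_card_filter, Function.comp_apply] using hsum
  exact_mod_cast this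

end Majorization

theorem LinearMap.exists_eq_of_forall_exists_apply_eq {K V W ι : Type*} [Field K] [Infinite K]
    [AddCommGroup V] [Module K V] [AddCommGroup W] [Module K W] [Finite ι]
    (f g : ι → V →ₗ[K] W) (h : ∀ v, ∃ i, f i v = g i v) : ∃ i, f i = g i := by
  obtain ⟨i, hi⟩ := Subspace.exists_eq_top_of_iUnion_eq_univ (p := fun i => ker (f i - g i))
    (Set.eq_univ_of_forall fun v => Set.mem_iUnion.2 <| (h v).imp fun i hi => by simp [hi])
  exact ⟨i, sub_eq_zero.1 (ker_eq_top.1 hi)⟩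

section Columns

variable {ι α : Type*} {a : ι → ι → α}

theorem forall_eq_of_comp_perm_of_eq [DecidableEq ι]
    (h : ∀ σ : Perm ι, ∃ ρ : Perm ι, ∀ j, a (σ j) = a j ∘ ρ)
    {j k : ι} (hjk : j ≠ k) (heq : a j = a k) (l : ι) : a l = a j := by
  rcases eq_or_ne l j with rfl | hlj
  · rfl
  obtain ⟨ρ, hρ⟩ := h (swap k l)
  calc a l = a (swap k l k) := by rw [swap_apply_left]
    _ = a j ∘ ρ := by rw [hρ, heq]
    _ = a j := by rw [← hρ, swap_apply_of_ne_of_ne hjk hlj.symm]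

theorem forall_eq_or_injective_of_comp_perm [DecidableEq ι]
    (h : ∀ σ : Perm ι, ∃ ρ : Perm ι, ∀ j, a (σ j) = a j ∘ ρ) :
    (∀ j k, a j = a k) ∨ Injective a := by
  refine or_iff_not_imp_right.2 fun hinj => ?_
  obtain ⟨j, k, heq, hjk⟩ := not_injective_iff.1 hinj
  exact fun l m => (forall_eq_of_comp_perm_of_eq h hjk heq l).trans
    (forall_eq_of_comp_perm_of_eq h hjk heq m).symm

theorem exists_eq_comp_of_comp_perm [Finite ι]
    (h : ∀ σ : Perm ι, ∃ ρ : Perm ι, ∀ j, a (σ j) = a j ∘ ρ)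
    (ha : Injective a) (j : ι) (ρ : Perm ι) : ∃ k, a j ∘ ρ = a k := by
  choose θ hθ using h
  have hθinj : Injective θ := fun σ τ hστ =>
    Equiv.ext fun j => ha <| by rw [hθ σ, hθ τ, hστ]
  obtain ⟨σ, rfl⟩ := (Finite.injective_iff_surjective.1 hθinj) ρ
  exact ⟨σ j, (hθ σ j).symm⟩

theorem exists_perm_eq_ite_of_comp_perm [Fintype ι] [DecidableEq ι] [DecidableEq α] [Nonempty ι]
    (h : ∀ σ : Perm ι, ∃ ρ : Perm ι, ∀ j, a (σ j) = a j ∘ ρ) (ha : Injective a) :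
    ∃ (p : Perm ι) (e d : α), ∀ j i, a j i = if i = p j then e else d := by
  obtain ⟨j₀⟩ := ‹Nonempty ι›
  have hcard : #(rearrangements (a j₀)) ≤ Fintype.card ι := by
    refine (card_le_card (t := univ.image a) fun w hw => ?_).trans card_image_le
    obtain ⟨ρ, -, rfl⟩ := mem_image.1 hw
    obtain ⟨k, hk⟩ := exists_eq_comp_of_comp_perm h ha j₀ ρ
    exact hk ▸ mem_image_of_mem a (mem_univ k)
  obtain ⟨i₀, d, hd⟩ := exists_forall_ne_eq_of_card_rearrangements_le hcard
  have hrearr (j : ι) : ∃ ρ : Perm ι, a j = a j₀ ∘ ρ := by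
    obtain ⟨ρ, hρ⟩ := h (swap j₀ j)
    exact ⟨ρ, by rw [← hρ, swap_apply_left]⟩
  choose ρ hρ using hrearr
  have hform (j i : ι) : a j i = if i = (ρ j)⁻¹ i₀ then a j₀ i₀ else d := by
    rw [hρ j, Function.comp_apply]
    simp only [Perm.eq_inv_iff_eq]
    split_ifs with hi
    · rw [hi]
    · exact hd _ hi
  have hinj : Injective fun j => (ρ j)⁻¹ i₀ := fun j k (hjk : (ρ j)⁻¹ i₀ = (ρ k)⁻¹ i₀) =>
    ha (funext fun i => by rw [hform j, hform k, hjk])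
  exact ⟨ofBijective _ (Finite.injective_iff_bijective.1 hinj), a j₀ i₀, d, hform⟩

end Columns

section LinearMap

variable {R ι : Type*} [CommRing R] [Fintype ι] [DecidableEq ι] (Φ : (ι → R) →ₗ[R] (ι → R))

theorem LinearMap.apply_eq_sum_smul_single (x : ι → R) :
    Φ x = ∑ j, x j • Φ (Pi.single j 1) := by
  rw [pi_apply_eq_sum_univ]
  congr! 3 with j
  funext k
  simp [Pi.single_apply, eq_comm]

theorem LinearMap.apply_eq_sum_smul_of_forall_apply_single_eq {b : ι → R}
    (h : ∀ j, Φ (Pi.single j 1) = b) (x : ι → R) : Φ x = (∑ i, x i) • b := by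
  rw [Φ.apply_eq_sum_smul_single, sum_smul]
  simp only [h]

theorem LinearMap.apply_eq_smul_permMatrix_mulVec_add {p : Perm ι} {e d : R}
    (h : ∀ j i, Φ (Pi.single j 1) i = if i = p j then e else d) (x : ι → R) :
    Φ x = (e - d) • (p⁻¹.permMatrix R *ᵥ x) + (d * ∑ i, x i) • fun _ => 1 := by
  rw [Φ.apply_eq_sum_smul_single x]
  funext i
  have hterm (j : ι) : x j * (if i = p j then e else d) =
      (e - d) * (if p⁻¹ i = j then x j else 0) + d * x j := by
    simp only [Perm.inv_eq_iff_eq]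
    split_ifs <;> ring
  simp only [Finset.sum_apply, Pi.smul_apply, smul_eq_mul, h, hterm, sum_add_distrib, ← mul_sum,
    sum_ite_eq, mem_univ, if_true, permMatrix_mulVec, Pi.add_apply, Function.comp_apply, mul_one]

end LinearMap

section MajorizationPreserving

variable {n : ℕ} {Φ : (Fin n → ℝ) →ₗ[ℝ] (Fin n → ℝ)}

theorem exists_perm_forall_map_comp_eq (hΦ : ∀ x y, Maj x y → Maj (Φ x) (Φ y))
    (σ : Perm (Fin n)) : ∃ ρ : Perm (Fin n), ∀ y, Φ (y ∘ σ) = Φ y ∘ ρ := by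
  obtain ⟨ρ, hρ⟩ := LinearMap.exists_eq_of_forall_exists_apply_eq
    (fun _ => Φ ∘ₗ LinearMap.funLeft ℝ ℝ σ) (fun ρ : Perm (Fin n) => LinearMap.funLeft ℝ ℝ ρ ∘ₗ Φ)
    fun y => exists_perm_of_maj_of_maj (hΦ _ _ (maj_comp_perm y σ)) (hΦ _ _ (maj_of_comp_perm y σ))
  exact ⟨ρ, LinearMap.congr_fun hρ⟩

theorem exists_perm_forall_map_single_eq (hΦ : ∀ x y, Maj x y → Maj (Φ x) (Φ y))
    (σ : Perm (Fin n)) :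
    ∃ ρ : Perm (Fin n), ∀ j, Φ (Pi.single (σ j) 1) = Φ (Pi.single j 1) ∘ ρ := by
  obtain ⟨ρ, hρ⟩ := exists_perm_forall_map_comp_eq hΦ σ⁻¹
  exact ⟨ρ, fun j => by rw [← hρ, Pi.single_comp_equiv]; rfl⟩

end MajorizationPreserving

/-- Theorem 1.1, Ando: a linear map `Φ` is strictly isotone iff it
is of the form `x ↦ (tr x)·a`, or `x ↦ c·(P *ᵥ x) + d·(tr x)·e` for a permutation
matrix `P`. -/
theorem ando_characterization {n : ℕ} (hn : 1 ≤ n)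
    (Φ : (Fin n → ℝ) →ₗ[ℝ] (Fin n → ℝ)) :
    (∀ x y : Fin n → ℝ, Maj x y → Maj (Φ x) (Φ y)) ↔
      ((∃ a : Fin n → ℝ, ∀ x : Fin n → ℝ, Φ x = (∑ i, x i) • a) ∨
        (∃ (c d : ℝ) (P : Matrix (Fin n) (Fin n) ℝ), IsPermMatrix P ∧
          ∀ x : Fin n → ℝ, Φ x = c • (P *ᵥ x) + (d * ∑ i, x i) • (fun _ => (1 : ℝ)))) := by
  constructor
  · intro hΦ
    let a (j : Fin n) : Fin n → ℝ := Φ (Pi.single j 1)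
    have hcol : ∀ σ : Perm (Fin n), ∃ ρ : Perm (Fin n), ∀ j, a (σ j) = a j ∘ ρ :=
      exists_perm_forall_map_single_eq hΦ
    rcases forall_eq_or_injective_of_comp_perm hcol with hconst | hinj
    · exact Or.inl ⟨_, Φ.apply_eq_sum_smul_of_forall_apply_single_eq fun j => hconst j ⟨0, hn⟩⟩
    · have : Nonempty (Fin n) := ⟨⟨0, hn⟩⟩
      obtain ⟨p, e, d, hp⟩ := exists_perm_eq_ite_of_comp_perm hcol hinj
      exact Or.inr ⟨e - d, d, _, ⟨p⁻¹, rfl⟩, Φ.apply_eq_smul_permMatrix_mulVec_add hp⟩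
  · rintro (⟨b, hb⟩ | ⟨c, d, P, ⟨σ, rfl⟩, hΦ⟩) x y hxy
    · rw [hb, hb, hxy.sum_eq]
      exact Maj.refl _
    · rw [hΦ, hΦ, hxy.sum_eq, permMatrix_mulVec, permMatrix_mulVec]
      exact ((hxy.comp_perm σ).smul c).add_smul_one _
end
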